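/- The index of L^{(n)} = H̃_s ∩ {w ∈ W̃_s : w(m) ≡ m (mod ns) for all m} in the affine hyperoctahedral group H̃_s equals (2n)^u · u!, where u = ⌊s/2⌋. -/

import Mathlib

/-- A partition: a weakly decreasing, eventually-zero sequence of naturals
(0-indexed: `f i` is the `(i+1)`-th part). -/
structure Partn where
  f : ℕ → ℕ
  antitone : Antitone f
  eventually_zero : ∃ N, ∀ i, N ≤ i → f i = 0

/-- The beta-set `B(λ) = {λ_i - i : i ≥ 1}`. -/
def betaSet (p : Partn) : Set ℤ := {b | ∃ i : ℕ, b = (p.f i : ℤ) - (i + 1)}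

/-- `conjCount p j` is the `(j+1)`-th part of the conjugate partition. -/
noncomputable def conjCount (p : Partn) (j : ℕ) : ℕ := Set.ncard {i : ℕ | j + 1 ≤ p.f i}

/-- Hook length of the cell in row `r+1`, column `c+1` (1-indexed formula
`1 + (λ_r - r) + (λ'_c - c)`). -/
noncomputable def hookLen (p : Partn) (r c : ℕ) : ℤ :=
  1 + ((p.f r : ℤ) - (r + 1)) + ((conjCount p c : ℤ) - (c + 1))

/-- `p` is an `s`-core: no hook length is divisible by `s`. -/
def IsCore (s : ℕ) (p : Partn) : Prop :=
  ∀ r c : ℕ, c < p.f r → ¬ ((s : ℤ) ∣ hookLen p r c)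

/-- `p` is self-conjugate. -/
def SelfConj (p : Partn) : Prop := ∀ j, p.f j = conjCount p j

/-- The `s`-set of an `s`-core: `S(λ) = (B(λ)+s) \ B(λ)`. -/
def sSet (s : ℕ) (p : Partn) : Set ℤ := {x | x - s ∈ betaSet p ∧ x ∉ betaSet p}

/-- An `s`-set: `s` integers, pairwise incongruent mod `s`, summing to `C(s,2)`. -/
def IsSSet (s : ℕ) (X : Set ℤ) : Prop :=
  X.ncard = s ∧ (∀ a ∈ X, ∀ b ∈ X, a ≠ b → ¬ ((s : ℤ) ∣ (a - b))) ∧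
    (∑ᶠ x ∈ X, x) = (s.choose 2 : ℤ)

/-- The affine symmetric group `W̃_s`, as a set of permutations of `ℤ`:
`w(m+s) = w(m)+s` and `w(0)+⋯+w(s-1) = C(s,2)`. -/
def AffSymSet (s : ℕ) : Set (Equiv.Perm ℤ) :=
  {w | (∀ m : ℤ, w (m + s) = w m + s) ∧
    (∑ i ∈ Finset.range s, w (i : ℤ)) = (s.choose 2 : ℤ)}

/-- The underlying function of the Coxeter generator `w_i` of `W̃_s`, where `a = i - 1`:
swaps `m` and `m+1` whenever `m ≡ i - 1 (mod s)`. -/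
def genFun (s : ℕ) (a : ℤ) : ℤ → ℤ := fun m =>
  if (s : ℤ) ∣ (m - a) then m + 1 else if (s : ℤ) ∣ (m - a - 1) then m - 1 else m

lemma genFun_involutive (s : ℕ) (hs : 2 ≤ s) (a : ℤ) :
    Function.Involutive (genFun s a) := by
  have h1 : ¬ ((s : ℤ) ∣ 1) := by
    intro h
    have := Int.le_of_dvd one_pos h
    omega
  intro m
  unfold genFun
  by_cases hA : (s : ℤ) ∣ (m - a)
  · rw [if_pos hA]
    have hB : ¬ (s : ℤ) ∣ (m + 1 - a) := by
      intro h
      have := dvd_sub h hA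
      rw [show m + 1 - a - (m - a) = 1 by ring] at this
      exact h1 this
    rw [if_neg hB, if_pos (by rw [show m + 1 - a - 1 = m - a by ring]; exact hA)]
    ring
  · rw [if_neg hA]
    by_cases hB : (s : ℤ) ∣ (m - a - 1)
    · rw [if_pos hB, if_pos (by rw [show m - 1 - a = m - a - 1 by ring]; exact hB)]
      ring
    · rw [if_neg hB, if_neg hA, if_neg hB]

/-- The Coxeter generator `w_i` of `W̃_s`, where `a = i - 1`. -/
def genPerm (s : ℕ) (hs : 2 ≤ s) (a : ℤ) : Equiv.Perm ℤ :=
  (genFun_involutive s hs a).toPerm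

/-- The constant `c = (s-1)(t-1)/2`. -/
def lc (s t : ℕ) : ℤ := (((s : ℤ) - 1) * ((t : ℤ) - 1)) / 2

/-- The image `ẘ_i` of the generator `w_i` under the level `t` action on `ℤ`:
`m ↦ m + t` if `m ≡ (i-1)t - c (mod s)`, `m ↦ m - t` if `m ≡ it - c (mod s)`,
`m ↦ m` otherwise. -/
def levelGenFun (s t : ℕ) (i : ℤ) : ℤ → ℤ := fun m =>
  if (s : ℤ) ∣ (m - ((i - 1) * t - lc s t)) then m + t
  else if (s : ℤ) ∣ (m - (i * t - lc s t)) then m - t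
  else m

/-- `Φ` is (the restriction to `W̃_s` of) the level `t` action of `W̃_s` on `ℤ`:
a multiplicative map on `W̃_s` sending each generator `w_i` to `ẘ_i`. -/
def IsLevelTAction (s t : ℕ) (hs : 2 ≤ s) (Φ : Equiv.Perm ℤ → Equiv.Perm ℤ) : Prop :=
  (∀ w v : Equiv.Perm ℤ, w ∈ AffSymSet s → v ∈ AffSymSet s → Φ (w * v) = Φ w * Φ v) ∧
  (∀ i m : ℤ, Φ (genPerm s hs (i - 1)) m = levelGenFun s t i m)

/-- Removing a rim hook of length `t`, in terms of beta-sets: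
`μ` is obtained from `λ` by removing a rim `t`-hook. -/
def RemoveHook (t : ℕ) (p q : Partn) : Prop :=
  ∃ b ∈ betaSet p, b - t ∉ betaSet p ∧ betaSet q = insert (b - t) (betaSet p \ {b})

namespace IndexL

lemma gauss (s : ℕ) : (∑ i ∈ Finset.range s, (i : ℤ)) = (s.choose 2 : ℤ) := by
  have h1 := Finset.sum_range_id_mul_two s
  have h2 : (∑ i ∈ Finset.range s, (i:ℤ)) = ((∑ i ∈ Finset.range s, i : ℕ) : ℤ) := by
    push_cast; rfl
  rw [h2]
  congr 1
  have := Nat.choose_two_right s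
  omega

variable {s n : ℕ}

lemma shift {w : Equiv.Perm ℤ} (hw : ∀ m : ℤ, w (m + s) = w m + s)
    (m c : ℤ) (hc : (s : ℤ) ∣ c) : w (m + c) = w m + c := by
  obtain ⟨j, rfl⟩ := hc
  induction j using Int.induction_on with
  | zero => simp
  | succ k ih =>
      have : m + (s : ℤ) * (k + 1) = (m + s * k) + s := by ring
      rw [this, hw, ih]; ring
  | pred k ih =>
      have h1 : m + (s:ℤ) * (-k - 1) + s = m + s * (-k) := by ring
      have := hw (m + (s:ℤ) * (-k - 1))
      rw [h1, ih] at this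
      omega

lemma inv_shift {w : Equiv.Perm ℤ} (hw : ∀ m : ℤ, w (m + s) = w m + s)
    (m : ℤ) : w⁻¹ (m + s) = w⁻¹ m + s := by
  apply w.injective
  rw [show ∀ x, w (w⁻¹ x) = x from fun x => w.apply_symm_apply x, hw,
    show ∀ x, w (w⁻¹ x) = x from fun x => w.apply_symm_apply x]

lemma inv_sym {w : Equiv.Perm ℤ} (hw : ∀ m : ℤ, w (-1 - m) = -1 - w m)
    (m : ℤ) : w⁻¹ (-1 - m) = -1 - w⁻¹ m := by
  apply w.injective
  rw [show ∀ x, w (w⁻¹ x) = x from fun x => w.apply_symm_apply x, hw,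
    show ∀ x, w (w⁻¹ x) = x from fun x => w.apply_symm_apply x]

lemma res_inj {w : Equiv.Perm ℤ} (hw : ∀ m : ℤ, w (m + s) = w m + s)
    {a b : ℤ} (h : (s : ℤ) ∣ (w a - w b)) : (s : ℤ) ∣ (a - b) := by
  obtain ⟨c, hc⟩ := h
  have h2 : w (b + s * c) = w b + s * c := shift hw b _ ⟨c, rfl⟩
  have hab : w a = w (b + s * c) := by omega
  have := w.injective hab
  exact ⟨c, by omega⟩

/-! ### The subgroup sets -/

def HS (s : ℕ) : Set (Equiv.Perm ℤ) :=
  {w : Equiv.Perm ℤ | w ∈ AffSymSet s ∧ ∀ m : ℤ, w (-1 - m) = -1 - w m}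

def LS (s n : ℕ) : Set (Equiv.Perm ℤ) :=
  {w' : Equiv.Perm ℤ | (w' ∈ AffSymSet s ∧ ∀ m : ℤ, w' (-1 - m) = -1 - w' m) ∧
      ∀ m : ℤ, ((n : ℤ) * s) ∣ (w' m - m)}

def cosetOf (s n : ℕ) (w : Equiv.Perm ℤ) : Set (Equiv.Perm ℤ) :=
  {x | ∃ k ∈ LS s n, x = w * k}

lemma one_mem_LS : (1 : Equiv.Perm ℤ) ∈ LS s n := by
  refine ⟨⟨⟨fun m => rfl, ?_⟩, fun m => rfl⟩, fun m => by simp⟩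
  simpa using gauss s

lemma sdvdN {c : ℤ} (h : ((n:ℤ) * s) ∣ c) : (s:ℤ) ∣ c :=
  dvd_trans (dvd_mul_left _ _) h

lemma coset_sub {w w' : Equiv.Perm ℤ} (hw : w ∈ HS s) (hw' : w' ∈ HS s)
    (hd : ∀ m : ℤ, ((n:ℤ) * s) ∣ (w m - w' m)) : cosetOf s n w ⊆ cosetOf s n w' := by
  rintro x ⟨k, hk, rfl⟩
  refine ⟨w'⁻¹ * (w * k), ?_, by group⟩
  obtain ⟨⟨hwp, hws⟩, hwsym⟩ := hw
  obtain ⟨⟨hw'p, hw's⟩, hw'sym⟩ := hw'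
  obtain ⟨⟨⟨hkp, hks⟩, hksym⟩, hkd⟩ := hk
  -- key pointwise formula
  have key : ∀ m : ℤ, (w'⁻¹ * (w * k)) m = m + ((w m - w' m) + (k m - m)) := by
    intro m
    have h1 : k m = m + (k m - m) := by ring
    have h2 : w (k m) = w m + (k m - m) := by
      have := shift hwp m _ (sdvdN (hkd m))
      rw [show m + (k m - m) = k m by ring] at this
      exact this
    have h3 : w (k m) = w' m + ((w m - w' m) + (k m - m)) := by rw [h2]; ring
    have h4 : w'⁻¹ (w' m + ((w m - w' m) + (k m - m))) = m + ((w m - w' m) + (k m - m)) := by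
      have := shift (inv_shift hw'p) (w' m) ((w m - w' m) + (k m - m))
        (dvd_add (sdvdN (hd m)) (sdvdN (hkd m)))
      simpa using this
    simp only [Equiv.Perm.mul_apply]
    rw [h3, h4]
  refine ⟨⟨⟨?_, ?_⟩, ?_⟩, ?_⟩
  · intro m
    rw [key, key]
    have e1 : w (m + s) - w' (m + s) = w m - w' m := by rw [hwp, hw'p]; ring
    have e2 : k (m + s) - (m + s) = k m - m := by rw [hkp]; ring
    rw [e1, e2]; ring
  · have : ∀ i ∈ Finset.range s, (w'⁻¹ * (w * k)) (i:ℤ) =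
        (i:ℤ) + ((w i - w' i) + (k i - i)) := fun i _ => key i
    rw [Finset.sum_congr rfl this]
    rw [Finset.sum_add_distrib, Finset.sum_add_distrib, Finset.sum_sub_distrib,
      Finset.sum_sub_distrib, hws, hw's, hks, gauss]
    ring
  · intro m
    rw [key, key]
    have e1 : w (-1 - m) - w' (-1 - m) = -(w m - w' m) := by rw [hwsym, hw'sym]; ring
    have e2 : k (-1 - m) - (-1 - m) = -(k m - m) := by rw [hksym]; ring
    rw [e1, e2]; ring
  · intro m
    rw [key]
    have : m + (w m - w' m + (k m - m)) - m = (w m - w' m) + (k m - m) := by ring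
    rw [this]
    exact dvd_add (hd m) (hkd m)

lemma coset_eq_iff {w w' : Equiv.Perm ℤ} (hw : w ∈ HS s) (hw' : w' ∈ HS s) :
    cosetOf s n w = cosetOf s n w' ↔ ∀ m : ℤ, ((n:ℤ) * s) ∣ (w m - w' m) := by
  constructor
  · intro h
    have hmem : w' ∈ cosetOf s n w' := ⟨1, one_mem_LS, by simp⟩
    rw [← h] at hmem
    obtain ⟨k, hk, hx⟩ := hmem
    intro m
    have h1 : w' m = w (k m) := by rw [hx]; rfl
    have h2 : w (k m) = w m + (k m - m) := by
      have h3 := shift hw.1.1 m _ (sdvdN (hk.2 m))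
      rw [show m + (k m - m) = k m by ring] at h3
      exact h3
    have : w m - w' m = -(k m - m) := by omega
    rw [this]
    exact dvd_neg.mpr (hk.2 m)
  · intro hd
    apply Set.Subset.antisymm (coset_sub hw hw' hd)
    exact coset_sub hw' hw (fun m => by
      rw [show w' m - w m = -(w m - w' m) by ring]
      exact dvd_neg.mpr (hd m))

end IndexL

namespace IndexL

variable {s n : ℕ}

/-! ### The standard permutation built from `u = s/2` chosen values -/

def baseF (s : ℕ) (b : ℕ → ℤ) (r : ℤ) : ℤ :=
  if r < ((s / 2 : ℕ) : ℤ) then b r.toNat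
  else if 2 * r + 1 = (s : ℤ) then r
  else (s : ℤ) - 1 - b ((s : ℤ) - 1 - r).toNat

def fwF (s : ℕ) (b : ℕ → ℤ) (m : ℤ) : ℤ := baseF s b (m % s) + s * (m / s)

def Adm (s : ℕ) (b : ℕ → ℤ) : Prop :=
  (∀ i j : ℕ, i < s/2 → j < s/2 → (s:ℤ) ∣ (b i - b j) → i = j) ∧
  (∀ i j : ℕ, i < s/2 → j < s/2 → ¬ ((s:ℤ) ∣ (b i + b j - ((s:ℤ) - 1))))

variable {b : ℕ → ℤ}

lemma base_flip (b : ℕ → ℤ) (hs : 2 ≤ s) {r : ℤ} (h0 : 0 ≤ r) (hr : r < (s:ℤ)) :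
    baseF s b ((s:ℤ) - 1 - r) = (s:ℤ) - 1 - baseF s b r := by
  unfold baseF
  by_cases h1 : r < ((s / 2 : ℕ) : ℤ)
  · rw [if_pos h1, if_neg (by omega), if_neg (by omega),
      show (((s:ℤ) - 1 - ((s:ℤ) - 1 - r)).toNat) = r.toNat by omega]
  · by_cases h2 : 2 * r + 1 = (s : ℤ)
    · rw [if_neg h1, if_pos h2, show (s:ℤ) - 1 - r = r by omega, if_neg h1, if_pos h2]
    · rw [if_neg h1, if_neg h2, if_pos (by omega)]
      omega

lemma base_res_inj (hb : Adm s b) (hs : 2 ≤ s) {r r' : ℤ}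
    (h0 : 0 ≤ r) (hr : r < (s:ℤ)) (h0' : 0 ≤ r') (hr' : r' < (s:ℤ))
    (h : (s:ℤ) ∣ (baseF s b r - baseF s b r')) : r = r' := by
  unfold baseF at h
  by_cases h1 : r < ((s / 2 : ℕ) : ℤ) <;> by_cases h1' : r' < ((s / 2 : ℕ) : ℤ)
  · rw [if_pos h1, if_pos h1'] at h
    have := hb.1 r.toNat r'.toNat (by omega) (by omega) h
    omega
  · rw [if_pos h1, if_neg h1'] at h
    by_cases h2' : 2 * r' + 1 = (s:ℤ)
    · rw [if_pos h2'] at h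
      obtain ⟨c, hc⟩ := h
      exact absurd ⟨2*c, by linarith⟩ (hb.2 r.toNat r.toNat (by omega) (by omega))
    · rw [if_neg h2'] at h
      obtain ⟨c, hc⟩ := h
      exact absurd ⟨c, by omega⟩
        (hb.2 r.toNat ((s:ℤ) - 1 - r').toNat (by omega) (by omega))
  · rw [if_neg h1, if_pos h1'] at h
    by_cases h2 : 2 * r + 1 = (s:ℤ)
    · rw [if_pos h2] at h
      obtain ⟨c, hc⟩ := h
      exact absurd ⟨-2*c, by linarith⟩ (hb.2 r'.toNat r'.toNat (by omega) (by omega))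
    · rw [if_neg h2] at h
      obtain ⟨c, hc⟩ := h
      exact absurd ⟨-c, by linarith⟩
        (hb.2 r'.toNat ((s:ℤ) - 1 - r).toNat (by omega) (by omega))
  · by_cases h2 : 2 * r + 1 = (s:ℤ) <;> by_cases h2' : 2 * r' + 1 = (s:ℤ)
    · omega
    · rw [if_neg h1, if_pos h2, if_neg h1', if_neg h2'] at h
      obtain ⟨c, hc⟩ := h
      exact absurd ⟨2*c, by linarith⟩
        (hb.2 (((s:ℤ) - 1 - r').toNat) (((s:ℤ) - 1 - r').toNat) (by omega) (by omega))
    · rw [if_neg h1, if_neg h2, if_neg h1', if_pos h2'] at h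
      obtain ⟨c, hc⟩ := h
      exact absurd ⟨-2*c, by linarith⟩
        (hb.2 (((s:ℤ) - 1 - r).toNat) (((s:ℤ) - 1 - r).toNat) (by omega) (by omega))
    · rw [if_neg h1, if_neg h2, if_neg h1', if_neg h2'] at h
      have hd : (s:ℤ) ∣ (b (((s:ℤ) - 1 - r').toNat) - b (((s:ℤ) - 1 - r).toNat)) := by
        obtain ⟨c, hc⟩ := h; exact ⟨c, by omega⟩
      have := hb.1 _ _ (by omega : ((s:ℤ) - 1 - r').toNat < s/2)
        (by omega : ((s:ℤ) - 1 - r).toNat < s/2) hd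
      omega

lemma base_res_surj (hb : Adm s b) (hs : 2 ≤ s) (y : ℤ) :
    ∃ j : ℤ, 0 ≤ j ∧ j < (s:ℤ) ∧ (s:ℤ) ∣ (y - baseF s b j) := by
  haveI : NeZero s := ⟨by omega⟩
  set F : Fin s → ZMod s := fun j => ((baseF s b (j:ℤ) : ℤ) : ZMod s) with hF
  have hinj : Function.Injective F := by
    intro j j' hjj
    have : ((baseF s b (j:ℤ) : ℤ) : ZMod s) = ((baseF s b (j':ℤ) : ℤ) : ZMod s) := hjj
    rw [ZMod.intCast_eq_intCast_iff'] at this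
    have hdvd : (s:ℤ) ∣ (baseF s b (j:ℤ) - baseF s b (j':ℤ)) := by
      have := Int.ModEq.dvd (Int.ModEq.symm (by exact_mod_cast this))
      omega
    have := base_res_inj hb hs (by positivity) (by exact_mod_cast j.2)
      (by positivity) (by exact_mod_cast j'.2) hdvd
    exact Fin.ext (by exact_mod_cast this)
  have hsurj : Function.Surjective F :=
    (Fintype.bijective_iff_injective_and_card F).mpr
      ⟨hinj, by simp [ZMod.card]⟩ |>.2
  obtain ⟨j, hj⟩ := hsurj ((y : ℤ) : ZMod s)
  refine ⟨(j:ℤ), by positivity, by exact_mod_cast j.2, ?_⟩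
  have : ((baseF s b (j:ℤ) : ℤ) : ZMod s) = ((y : ℤ) : ZMod s) := hj
  rw [ZMod.intCast_eq_intCast_iff'] at this
  have := Int.ModEq.dvd (by exact_mod_cast this : baseF s b (j:ℤ) ≡ y [ZMOD (s:ℤ)])
  omega

end IndexL

namespace IndexL

variable {s n : ℕ} {b : ℕ → ℤ}

lemma fw_eval (b : ℕ → ℤ) (hs : 2 ≤ s) {r : ℤ} (q : ℤ) (h0 : 0 ≤ r) (hr : r < (s:ℤ)) :
    fwF s b ((s:ℤ) * q + r) = baseF s b r + (s:ℤ) * q := by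
  unfold fwF
  have hmod : ((s:ℤ) * q + r) % s = r := by
    rw [show (s:ℤ) * q + r = r + s * q by ring, Int.add_mul_emod_self_left,
      Int.emod_eq_of_lt h0 hr]
  have hdiv : ((s:ℤ) * q + r) / s = q := by
    rw [show (s:ℤ) * q + r = r + s * q by ring,
      Int.add_mul_ediv_left r q (by omega : (s:ℤ) ≠ 0), Int.ediv_eq_zero_of_lt h0 hr]
    ring
  rw [hmod, hdiv]

lemma emod_bounds (hs : 2 ≤ s) (m : ℤ) : 0 ≤ m % (s:ℤ) ∧ m % (s:ℤ) < (s:ℤ) ∧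
    m = (s:ℤ) * (m / (s:ℤ)) + m % (s:ℤ) :=
  ⟨Int.emod_nonneg m (by omega), Int.emod_lt_of_pos m (by omega),
    (Int.mul_ediv_add_emod m (s:ℤ)).symm⟩

lemma fw_period (b : ℕ → ℤ) (hs : 2 ≤ s) (m : ℤ) : fwF s b (m + s) = fwF s b m + s := by
  obtain ⟨h0, hr, hm⟩ := emod_bounds hs m
  have e1 : m + (s:ℤ) = (s:ℤ) * (m / s + 1) + m % s := by rw [mul_add, mul_one]; omega
  rw [e1, fw_eval b hs _ h0 hr]
  unfold fwF
  ring

lemma fw_sym (b : ℕ → ℤ) (hs : 2 ≤ s) (m : ℤ) : fwF s b (-1 - m) = -1 - fwF s b m := by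
  obtain ⟨h0, hr, hm⟩ := emod_bounds hs m
  have e1 : -1 - m = (s:ℤ) * (-(m / s) - 1) + ((s:ℤ) - 1 - m % s) := by
    rw [mul_sub, mul_neg, mul_one]; omega
  rw [e1, fw_eval b hs _ (by omega) (by omega), base_flip b hs h0 hr]
  unfold fwF
  ring

lemma fw_inj (hb : Adm s b) (hs : 2 ≤ s) : Function.Injective (fwF s b) := by
  intro m m' h
  obtain ⟨h0, hr, hm⟩ := emod_bounds hs m
  obtain ⟨h0', hr', hm'⟩ := emod_bounds hs m'
  unfold fwF at h
  have hd : (s:ℤ) ∣ (baseF s b (m % s) - baseF s b (m' % s)) :=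
    ⟨m' / s - m / s, by linarith⟩
  have hre : m % (s:ℤ) = m' % s := base_res_inj hb hs h0 hr h0' hr' hd
  rw [hre] at h hm
  have : (s:ℤ) * (m / s) = s * (m' / s) := by omega
  have := mul_left_cancel₀ (by omega : (s:ℤ) ≠ 0) this
  omega

lemma fw_surj (hb : Adm s b) (hs : 2 ≤ s) : Function.Surjective (fwF s b) := by
  intro y
  obtain ⟨j, hj0, hjs, hdvd⟩ := base_res_surj hb hs y
  obtain ⟨t, ht⟩ := hdvd
  exact ⟨(s:ℤ) * t + j, by rw [fw_eval b hs t hj0 hjs]; omega⟩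

/-- The permutation of `ℤ` determined by admissible data `b`. -/
noncomputable def permOf (s : ℕ) (b : ℕ → ℤ) (hb : Adm s b) (hs : 2 ≤ s) : Equiv.Perm ℤ :=
  Equiv.ofBijective (fwF s b) ⟨fw_inj hb hs, fw_surj hb hs⟩

@[simp] lemma permOf_apply (hb : Adm s b) (hs : 2 ≤ s) (m : ℤ) :
    permOf s b hb hs m = fwF s b m := rfl

lemma fw_sum (b : ℕ → ℤ) (hs : 2 ≤ s) :
    (∑ i ∈ Finset.range s, fwF s b (i:ℤ)) = (s.choose 2 : ℤ) := by
  have hfb : ∀ i ∈ Finset.range s, fwF s b (i:ℤ) = baseF s b (i:ℤ) := by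
    intro i hi
    rw [Finset.mem_range] at hi
    have := fw_eval b hs 0 (by positivity : (0:ℤ) ≤ (i:ℤ)) (by exact_mod_cast hi)
    simpa using this
  rw [Finset.sum_congr rfl hfb]
  have h1 := Finset.sum_range_reflect (fun i : ℕ => baseF s b (i:ℤ)) s
  have h2 : ∀ i ∈ Finset.range s, baseF s b ((s - 1 - i : ℕ) : ℤ) =
      (s:ℤ) - 1 - baseF s b (i:ℤ) := by
    intro i hi
    rw [Finset.mem_range] at hi
    rw [show (((s - 1 - i : ℕ)) : ℤ) = (s:ℤ) - 1 - (i:ℤ) by omega]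
    exact base_flip b hs (by positivity) (by exact_mod_cast hi)
  rw [Finset.sum_congr rfl h2, Finset.sum_sub_distrib, Finset.sum_const,
    Finset.card_range, nsmul_eq_mul] at h1
  have hch : 2 * (s.choose 2) = s * (s - 1) := by
    have h4 := Nat.choose_two_right s
    have he : 2 ∣ s * (s - 1) := by
      have h5 := Nat.even_mul_succ_self (s - 1)
      rw [show s - 1 + 1 = s from by omega] at h5
      rw [mul_comm]
      exact h5.two_dvd
    omega
  have h3 : ((s:ℤ)) * ((s:ℤ) - 1) = ((s * (s - 1) : ℕ) : ℤ) := by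
    rw [Nat.cast_mul, Nat.cast_sub (by omega : 1 ≤ s)]
    push_cast
    ring
  have hch' : 2 * ((s.choose 2 : ℕ) : ℤ) = (s:ℤ) * ((s:ℤ) - 1) := by
    rw [h3]
    exact_mod_cast hch
  linarith

lemma permOf_mem_HS (hb : Adm s b) (hs : 2 ≤ s) : permOf s b hb hs ∈ HS s :=
  ⟨⟨fun m => fw_period b hs m, fw_sum b hs⟩, fun m => fw_sym b hs m⟩

end IndexL

namespace IndexL

variable {s n : ℕ}

lemma eq_zero_of_dvd_small {d x : ℤ} (h : d ∣ x) (h1 : -d < x) (h2 : x < d) : x = 0 := by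
  by_contra hx
  have : d ≤ |x| := Int.le_of_dvd (abs_pos.mpr hx) ((dvd_abs d x).mpr h)
  rcases abs_cases x with ⟨he, _⟩ | ⟨he, _⟩ <;> omega

lemma HS_middle {w : Equiv.Perm ℤ} (hw : w ∈ HS s) (hodd : 2 * (s/2) + 1 = s) :
    w ((s/2 : ℕ) : ℤ) = ((s/2 : ℕ) : ℤ) := by
  obtain ⟨⟨hper, _⟩, hsym⟩ := hw
  set u : ℤ := ((s/2 : ℕ) : ℤ) with hu
  have h1 : w (u - s) + s = w u := by
    have := hper (u - s)
    rw [show u - (s:ℤ) + s = u by ring] at this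
    omega
  have h2 : w (-1 - u) = -1 - w u := hsym u
  rw [show (-1 : ℤ) - u = u - s by omega] at h2
  omega

lemma dvd_sub_emod (a c : ℤ) : c ∣ (a - a % c) := by
  have := Int.mul_ediv_add_emod a c
  exact ⟨a / c, by linarith⟩

/-- two members of `HS` that agree mod `ns` on `[0, s/2)` agree mod `ns` everywhere. -/
lemma dvd_everywhere (hs : 2 ≤ s) {w v : Equiv.Perm ℤ} (hw : w ∈ HS s) (hv : v ∈ HS s)
    (h : ∀ i : ℕ, i < s/2 → ((n:ℤ) * s) ∣ (w i - v i)) :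
    ∀ m : ℤ, ((n:ℤ) * s) ∣ (w m - v m) := by
  have key : ∀ r : ℤ, 0 ≤ r → r < (s:ℤ) → ((n:ℤ) * s) ∣ (w r - v r) := by
    intro r h0 hr
    by_cases h1 : r < ((s/2 : ℕ) : ℤ)
    · have := h r.toNat (by omega)
      rwa [show ((r.toNat : ℕ) : ℤ) = r by omega] at this
    · by_cases h2 : 2 * r + 1 = (s:ℤ)
      · have hwm := HS_middle hw (by omega)
        have hvm := HS_middle hv (by omega)
        rw [show r = ((s/2 : ℕ) : ℤ) by omega, hwm, hvm]
        simp
      · -- r = s - 1 - i with i < s/2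
        set i : ℤ := (s:ℤ) - 1 - r with hi
        have hi0 : 0 ≤ i := by omega
        have hiu : i < ((s/2 : ℕ) : ℤ) := by omega
        have hwr : w r = -1 - w i + s := by
          have e1 : r = (-1 - i) + s := by omega
          rw [e1, hw.1.1, hw.2]
        have hvr : v r = -1 - v i + s := by
          have e1 : r = (-1 - i) + s := by omega
          rw [e1, hv.1.1, hv.2]
        have hd : ((n:ℤ) * s) ∣ (w i - v i) := by
          have := h i.toNat (by omega)
          rwa [show ((i.toNat : ℕ) : ℤ) = i by omega] at this
        rw [hwr, hvr]
        rw [show (-1 - w i + s) - (-1 - v i + s) = -(w i - v i) by ring]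
        exact dvd_neg.mpr hd
  intro m
  obtain ⟨h0, hr, hm⟩ := emod_bounds hs m
  have hwm : w m = w (m % s) + s * (m / s) := by
    have := shift hw.1.1 (m % s) ((s:ℤ) * (m / s)) ⟨m / s, rfl⟩
    rw [show m % (s:ℤ) + s * (m / s) = m by omega] at this
    omega
  have hvm : v m = v (m % s) + s * (m / s) := by
    have := shift hv.1.1 (m % s) ((s:ℤ) * (m / s)) ⟨m / s, rfl⟩
    rw [show m % (s:ℤ) + s * (m / s) = m by omega] at this
    omega
  rw [hwm, hvm, show w (m % s) + s * (m/s) - (v (m % s) + s * (m/s)) =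
    w (m % s) - v (m % s) by ring]
  exact key _ h0 hr

/-! ### encoding tuples -/

def rhoOf (s : ℕ) (e : Fin (s/2) ↪ Fin (s/2)) (g : Fin (s/2) → Fin 2 × Fin n)
    (i : Fin (s/2)) : ℤ :=
  if (g i).1 = 0 then ((e i : ℕ) : ℤ) else (s:ℤ) - 1 - ((e i : ℕ) : ℤ)

def bOf (s n : ℕ) (e : Fin (s/2) ↪ Fin (s/2)) (g : Fin (s/2) → Fin 2 × Fin n) : ℕ → ℤ :=
  fun i => if h : i < s/2 then
    rhoOf s e g ⟨i, h⟩ + (s:ℤ) * (((g ⟨i, h⟩).2 : ℕ) : ℤ) else 0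

lemma rhoOf_bounds (hs : 2 ≤ s) (e : Fin (s/2) ↪ Fin (s/2)) (g : Fin (s/2) → Fin 2 × Fin n)
    (i : Fin (s/2)) : 0 ≤ rhoOf s e g i ∧ rhoOf s e g i < s ∧
      (rhoOf s e g i < ((s/2 : ℕ) : ℤ) ↔ (g i).1 = 0) := by
  have he : (e i : ℕ) < s/2 := (e i).2
  unfold rhoOf
  by_cases hg : (g i).1 = 0
  · rw [if_pos hg]
    exact ⟨by omega, by omega, fun _ => hg, fun _ => by omega⟩
  · rw [if_neg hg]
    exact ⟨by omega, by omega, fun hlt => absurd hlt (by omega), fun h0 => absurd h0 hg⟩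

lemma rhoOf_inj (hs : 2 ≤ s) (e : Fin (s/2) ↪ Fin (s/2)) (g : Fin (s/2) → Fin 2 × Fin n)
    {i j : Fin (s/2)} (h : rhoOf s e g i = rhoOf s e g j) : i = j := by
  have hei : (e i : ℕ) < s/2 := (e i).2
  have hej : (e j : ℕ) < s/2 := (e j).2
  unfold rhoOf at h
  by_cases hg : (g i).1 = 0 <;> by_cases hg' : (g j).1 = 0
  · rw [if_pos hg, if_pos hg'] at h
    exact e.injective (Fin.ext (by omega))
  · rw [if_pos hg, if_neg hg'] at h
    omega
  · rw [if_neg hg, if_pos hg'] at h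
    omega
  · rw [if_neg hg, if_neg hg'] at h
    exact e.injective (Fin.ext (by omega))

lemma rhoOf_sum_ne (hs : 2 ≤ s) (e : Fin (s/2) ↪ Fin (s/2)) (g : Fin (s/2) → Fin 2 × Fin n)
    (i j : Fin (s/2)) : rhoOf s e g i + rhoOf s e g j ≠ (s:ℤ) - 1 := by
  have hei : (e i : ℕ) < s/2 := (e i).2
  have hej : (e j : ℕ) < s/2 := (e j).2
  intro h
  unfold rhoOf at h
  by_cases hg : (g i).1 = 0 <;> by_cases hg' : (g j).1 = 0
  · rw [if_pos hg, if_pos hg'] at h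
    omega
  · rw [if_pos hg, if_neg hg'] at h
    have heq : i = j := e.injective (Fin.ext (by omega))
    rw [heq] at hg
    exact hg' hg
  · rw [if_neg hg, if_pos hg'] at h
    have heq : i = j := e.injective (Fin.ext (by omega))
    rw [heq] at hg
    exact hg hg'
  · rw [if_neg hg, if_neg hg'] at h
    omega

lemma bOf_eval (hs : 2 ≤ s) (e : Fin (s/2) ↪ Fin (s/2)) (g : Fin (s/2) → Fin 2 × Fin n)
    (i : Fin (s/2)) : bOf s n e g (i : ℕ) =
      rhoOf s e g i + (s:ℤ) * (((g i).2 : ℕ) : ℤ) := by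
  unfold bOf
  rw [dif_pos i.2]

lemma bOf_adm (hs : 2 ≤ s) (e : Fin (s/2) ↪ Fin (s/2)) (g : Fin (s/2) → Fin 2 × Fin n) :
    Adm s (bOf s n e g) := by
  constructor
  · intro i j hi hj hdvd
    rw [show i = ((⟨i, hi⟩ : Fin (s/2)) : ℕ) from rfl,
      show j = ((⟨j, hj⟩ : Fin (s/2)) : ℕ) from rfl, bOf_eval hs, bOf_eval hs] at hdvd
    set I : Fin (s/2) := ⟨i, hi⟩
    set J : Fin (s/2) := ⟨j, hj⟩
    obtain ⟨c, hc⟩ := hdvd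
    have hd2 : (s:ℤ) ∣ (rhoOf s e g I - rhoOf s e g J) :=
      ⟨c - (((g I).2 : ℕ) : ℤ) + (((g J).2 : ℕ) : ℤ), by linarith⟩
    obtain ⟨hb1, hb2, _⟩ := rhoOf_bounds hs e g I
    obtain ⟨hb1', hb2', _⟩ := rhoOf_bounds hs e g J
    have := eq_zero_of_dvd_small hd2 (by omega) (by omega)
    have := rhoOf_inj hs e g (by omega : rhoOf s e g I = rhoOf s e g J)
    exact congrArg Fin.val this
  · intro i j hi hj hdvd
    rw [show i = ((⟨i, hi⟩ : Fin (s/2)) : ℕ) from rfl,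
      show j = ((⟨j, hj⟩ : Fin (s/2)) : ℕ) from rfl, bOf_eval hs, bOf_eval hs] at hdvd
    set I : Fin (s/2) := ⟨i, hi⟩
    set J : Fin (s/2) := ⟨j, hj⟩
    obtain ⟨c, hc⟩ := hdvd
    have hd2 : (s:ℤ) ∣ (rhoOf s e g I + rhoOf s e g J - ((s:ℤ) - 1)) :=
      ⟨c - (((g I).2 : ℕ) : ℤ) - (((g J).2 : ℕ) : ℤ), by linarith⟩
    obtain ⟨hb1, hb2, _⟩ := rhoOf_bounds hs e g I
    obtain ⟨hb1', hb2', _⟩ := rhoOf_bounds hs e g J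
    have := eq_zero_of_dvd_small hd2 (by omega) (by omega)
    exact rhoOf_sum_ne hs e g I J (by omega)

lemma bOf_bounds (hs : 2 ≤ s) (e : Fin (s/2) ↪ Fin (s/2)) (g : Fin (s/2) → Fin 2 × Fin n)
    (i : Fin (s/2)) : 0 ≤ bOf s n e g (i : ℕ) ∧ bOf s n e g (i : ℕ) < (n:ℤ) * s := by
  rw [bOf_eval hs]
  obtain ⟨hb1, hb2, _⟩ := rhoOf_bounds hs e g i
  have ht : (((g i).2 : ℕ) : ℤ) < n := by exact_mod_cast ((g i).2).2
  have ht0 : 0 ≤ (((g i).2 : ℕ) : ℤ) := by positivity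
  constructor
  · positivity
  · nlinarith [hb2, ht, ht0]

end IndexL

namespace IndexL

variable {s n : ℕ}

lemma fw_small (hs : 2 ≤ s) (b : ℕ → ℤ) {i : ℕ} (hi : i < s) :
    fwF s b ((i : ℕ) : ℤ) = baseF s b (i : ℤ) := by
  have := fw_eval b hs 0 (by positivity : (0:ℤ) ≤ (i:ℤ)) (by exact_mod_cast hi)
  simpa using this

lemma baseF_small (hs : 2 ≤ s) (b : ℕ → ℤ) {i : ℕ} (hi : i < s/2) :
    baseF s b ((i : ℕ) : ℤ) = b i := by
  unfold baseF
  rw [if_pos (by exact_mod_cast hi), Int.toNat_natCast]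

def TT (s n : ℕ) := (Fin (s/2) ↪ Fin (s/2)) × (Fin (s/2) → Fin 2 × Fin n)

noncomputable def Phimap (s n : ℕ) (hs : 2 ≤ s) (p : TT s n) :
    {C : Set (Equiv.Perm ℤ) // ∃ w ∈ HS s, C = cosetOf s n w} :=
  ⟨cosetOf s n (permOf s (bOf s n p.1 p.2) (bOf_adm hs p.1 p.2) hs),
   permOf s (bOf s n p.1 p.2) (bOf_adm hs p.1 p.2) hs,
   permOf_mem_HS (bOf_adm hs p.1 p.2) hs, rfl⟩

lemma fin2_eq_of_iff {x y : Fin 2} (h : x = 0 ↔ y = 0) : x = y := by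
  fin_cases x <;> fin_cases y <;> simp_all

lemma Phimap_inj (hs : 2 ≤ s) : Function.Injective (Phimap s n hs) := by
  intro p q h
  have hcs : cosetOf s n (permOf s (bOf s n p.1 p.2) (bOf_adm hs p.1 p.2) hs)
      = cosetOf s n (permOf s (bOf s n q.1 q.2) (bOf_adm hs q.1 q.2) hs) :=
    congrArg Subtype.val h
  rw [coset_eq_iff (permOf_mem_HS _ hs) (permOf_mem_HS _ hs)] at hcs
  have hbi : ∀ i : Fin (s/2), bOf s n p.1 p.2 (i : ℕ) = bOf s n q.1 q.2 (i : ℕ) := by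
    intro i
    have hd := hcs ((i : ℕ) : ℤ)
    rw [permOf_apply, permOf_apply, fw_small hs _ (by omega : (i:ℕ) < s),
      fw_small hs _ (by omega : (i:ℕ) < s), baseF_small hs _ i.2, baseF_small hs _ i.2] at hd
    obtain ⟨hp0, hp1⟩ := bOf_bounds hs p.1 p.2 i
    obtain ⟨hq0, hq1⟩ := bOf_bounds hs q.1 q.2 i
    have := eq_zero_of_dvd_small hd (by omega) (by omega)
    omega
  have hcomp : ∀ i : Fin (s/2), p.1 i = q.1 i ∧ p.2 i = q.2 i := by
    intro i
    have hb := hbi i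
    rw [bOf_eval hs, bOf_eval hs] at hb
    obtain ⟨hp0, hp1, hpflag⟩ := rhoOf_bounds hs p.1 p.2 i
    obtain ⟨hq0, hq1, hqflag⟩ := rhoOf_bounds hs q.1 q.2 i
    have hdr : (s:ℤ) ∣ (rhoOf s p.1 p.2 i - rhoOf s q.1 q.2 i) :=
      ⟨(((q.2 i).2 : ℕ) : ℤ) - (((p.2 i).2 : ℕ) : ℤ), by linarith⟩
    have hrho : rhoOf s p.1 p.2 i = rhoOf s q.1 q.2 i := by
      have := eq_zero_of_dvd_small hdr (by omega) (by omega)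
      omega
    have ht : (((p.2 i).2 : ℕ) : ℤ) = (((q.2 i).2 : ℕ) : ℤ) := by
      have h2 : (s:ℤ) * (((p.2 i).2 : ℕ) : ℤ) = (s:ℤ) * (((q.2 i).2 : ℕ) : ℤ) := by omega
      exact mul_left_cancel₀ (by omega : (s:ℤ) ≠ 0) h2
    have hflag : (p.2 i).1 = (q.2 i).1 := by
      apply fin2_eq_of_iff
      rw [← hpflag, ← hqflag, hrho]
    have he : p.1 i = q.1 i := by
      unfold rhoOf at hrho
      by_cases hc : (q.2 i).1 = 0
      · rw [if_pos hc, if_pos (hflag ▸ hc : (p.2 i).1 = 0)] at hrho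
        exact Fin.ext (by omega)
      · rw [if_neg hc, if_neg (by rw [hflag]; exact hc)] at hrho
        exact Fin.ext (by omega)
    refine ⟨he, ?_⟩
    have ht2 : (p.2 i).2 = (q.2 i).2 := Fin.ext (by omega)
    exact Prod.ext hflag ht2
  obtain ⟨p1, p2⟩ := p
  obtain ⟨q1, q2⟩ := q
  have h1 : p1 = q1 := by
    apply Function.Embedding.ext
    intro i
    exact (hcomp i).1
  have h2 : p2 = q2 := funext fun i => (hcomp i).2
  rw [h1, h2]

end IndexL

namespace IndexL

variable {s n : ℕ}

lemma Phimap_surj (hs : 2 ≤ s) (hn : 1 ≤ n) : Function.Surjective (Phimap s n hs) := by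
  rintro ⟨C, w, hwH, rfl⟩
  have hper := hwH.1.1
  have hsym := hwH.2
  set u : ℤ := ((s/2 : ℕ) : ℤ) with hu
  set r : Fin (s/2) → ℤ := fun i => (w ((i : ℕ) : ℤ)) % s with hrdef
  have hrb : ∀ i : Fin (s/2), 0 ≤ r i ∧ r i < s := fun i =>
    ⟨Int.emod_nonneg _ (by omega), Int.emod_lt_of_pos _ (by omega : (0:ℤ) < s)⟩
  have hrmod : ∀ i : Fin (s/2), (s:ℤ) ∣ (w ((i:ℕ):ℤ) - r i) := fun i => dvd_sub_emod _ _
  -- r i is never the middle residue (when s is odd)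
  have hmid : ∀ i : Fin (s/2), 2 * (s/2) + 1 = s → r i ≠ u := by
    intro i hodd hcon
    have hwu : w u = u := HS_middle hwH hodd
    have hd : (s:ℤ) ∣ (w ((i:ℕ):ℤ) - w u) := by
      rw [hwu]
      have := hrmod i
      rw [hcon] at this
      exact this
    have := res_inj hper hd
    have hi2 : ((i:ℕ):ℤ) < u := by rw [hu]; exact_mod_cast i.2
    have := eq_zero_of_dvd_small this (by omega) (by omega)
    omega
  have hB : ∀ i : Fin (s/2), ¬ (r i < u) → ((s:ℤ) - 1 - r i).toNat < s/2 := by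
    intro i hni
    by_cases hodd : 2 * (s/2) + 1 = s
    · have := hmid i hodd
      have := hrb i
      omega
    · have := hrb i
      omega
  -- the w-residues are "injective" across the symmetry
  have hwres : ∀ i j : Fin (s/2), (s:ℤ) ∣ (w ((i:ℕ):ℤ) - w ((j:ℕ):ℤ)) → i = j := by
    intro i j hd
    have := res_inj hper hd
    have hi2 : ((i:ℕ):ℤ) < u := by rw [hu]; exact_mod_cast i.2
    have hj2 : ((j:ℕ):ℤ) < u := by rw [hu]; exact_mod_cast j.2
    have := eq_zero_of_dvd_small this (by omega) (by omega)
    exact Fin.ext (by omega)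
  have hwflip : ∀ j : Fin (s/2), w ((s:ℤ) - 1 - ((j:ℕ):ℤ)) = (s:ℤ) - 1 - w ((j:ℕ):ℤ) := by
    intro j
    have e1 : (s:ℤ) - 1 - ((j:ℕ):ℤ) = (-1 - ((j:ℕ):ℤ)) + s := by ring
    rw [e1, hper, hsym]
    ring
  set eFun : Fin (s/2) → Fin (s/2) := fun i =>
    if h : r i < u then ⟨(r i).toNat, by have := hrb i; omega⟩
    else ⟨((s:ℤ) - 1 - r i).toNat, hB i h⟩ with heFun
  have heInj : Function.Injective eFun := by
    intro i j hij
    have hvi := congrArg (fun x : Fin (s/2) => (x : ℕ)) hij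
    simp only [heFun] at hvi
    have hbi := hrb i
    have hbj := hrb j
    by_cases h1 : r i < u <;> by_cases h2 : r j < u
    · rw [dif_pos h1, dif_pos h2] at hvi
      simp only at hvi
      have hrr : r i = r j := by omega
      apply hwres
      obtain ⟨c1, hc1⟩ := hrmod i
      obtain ⟨c2, hc2⟩ := hrmod j
      exact ⟨c1 - c2, by linarith⟩
    · rw [dif_pos h1, dif_neg h2] at hvi
      simp only at hvi
      have hrr : r i = (s:ℤ) - 1 - r j := by omega
      -- then w i ≡ w (s-1-j) mod s, so i = s-1-j, impossible
      exfalso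
      have hd : (s:ℤ) ∣ (w ((i:ℕ):ℤ) - w ((s:ℤ) - 1 - ((j:ℕ):ℤ))) := by
        rw [hwflip j]
        obtain ⟨c1, hc1⟩ := hrmod i
        obtain ⟨c2, hc2⟩ := hrmod j
        exact ⟨c1 + c2, by linarith⟩
      have := res_inj hper hd
      have hi2 : ((i:ℕ):ℤ) < u := by rw [hu]; exact_mod_cast i.2
      have hj2 : ((j:ℕ):ℤ) < u := by rw [hu]; exact_mod_cast j.2
      have := eq_zero_of_dvd_small this (by omega) (by omega)
      omega
    · rw [dif_neg h1, dif_pos h2] at hvi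
      simp only at hvi
      have hrr : r j = (s:ℤ) - 1 - r i := by omega
      exfalso
      have hd : (s:ℤ) ∣ (w ((j:ℕ):ℤ) - w ((s:ℤ) - 1 - ((i:ℕ):ℤ))) := by
        rw [hwflip i]
        obtain ⟨c1, hc1⟩ := hrmod j
        obtain ⟨c2, hc2⟩ := hrmod i
        exact ⟨c1 + c2, by linarith⟩
      have := res_inj hper hd
      have hi2 : ((i:ℕ):ℤ) < u := by rw [hu]; exact_mod_cast i.2
      have hj2 : ((j:ℕ):ℤ) < u := by rw [hu]; exact_mod_cast j.2
      have := eq_zero_of_dvd_small this (by omega) (by omega)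
      omega
    · rw [dif_neg h1, dif_neg h2] at hvi
      simp only at hvi
      have hrr : r i = r j := by omega
      apply hwres
      obtain ⟨c1, hc1⟩ := hrmod i
      obtain ⟨c2, hc2⟩ := hrmod j
      exact ⟨c1 - c2, by linarith⟩
  set N : ℤ := (n:ℤ) * s with hN
  have hN0 : 0 < N := by positivity
  have hsdN : (s:ℤ) ∣ N := dvd_mul_left _ _
  have htb : ∀ i : Fin (s/2), 0 ≤ (w ((i:ℕ):ℤ) % N) / s ∧ (w ((i:ℕ):ℤ) % N) / s < n := by
    intro i
    have hA0 : 0 ≤ w ((i:ℕ):ℤ) % N := Int.emod_nonneg _ (by omega)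
    have hA1 : w ((i:ℕ):ℤ) % N < N := Int.emod_lt_of_pos _ hN0
    constructor
    · exact Int.ediv_nonneg hA0 (by omega)
    · rw [Int.ediv_lt_iff_lt_mul (by omega : (0:ℤ) < s)]
      calc w ((i:ℕ):ℤ) % N < N := hA1
        _ = (n:ℤ) * s := rfl
  set gFun : Fin (s/2) → Fin 2 × Fin n := fun i =>
    (if r i < u then (0 : Fin 2) else 1,
     ⟨((w ((i:ℕ):ℤ) % N) / s).toNat, by have := htb i; omega⟩) with hgFun
  refine ⟨⟨⟨eFun, heInj⟩, gFun⟩, ?_⟩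
  apply Subtype.ext
  show cosetOf s n _ = cosetOf s n w
  rw [coset_eq_iff (permOf_mem_HS _ hs) hwH]
  apply dvd_everywhere hs (permOf_mem_HS _ hs) hwH
  have main : ∀ i : Fin (s/2), ((n:ℤ) * s) ∣
      (bOf s n ⟨eFun, heInj⟩ gFun (i:ℕ) - w ((i:ℕ):ℤ)) := by
    intro i
    rw [bOf_eval hs]
    have hrho : rhoOf s ⟨eFun, heInj⟩ gFun i = r i := by
      unfold rhoOf
      by_cases h1 : r i < u
      · have hg1 : (gFun i).1 = 0 := by simp only [hgFun, if_pos h1]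
        rw [if_pos hg1]
        show (((eFun i : ℕ)) : ℤ) = r i
        simp only [heFun, dif_pos h1]
        have := hrb i
        omega
      · have hg1 : (gFun i).1 = 1 := by simp only [hgFun, if_neg h1]
        rw [if_neg (by rw [hg1]; exact one_ne_zero)]
        show (s:ℤ) - 1 - ((eFun i : ℕ) : ℤ) = r i
        simp only [heFun, dif_neg h1]
        have := hrb i
        have := hB i h1
        omega
    rw [hrho]
    have hA : r i + (s:ℤ) * ((((gFun i).2 : ℕ)) : ℤ) = w ((i:ℕ):ℤ) % N := by
      have hg2 : (((gFun i).2 : ℕ) : ℤ) = (w ((i:ℕ):ℤ) % N) / s := by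
        simp only [hgFun]
        have := htb i
        omega
      rw [hg2]
      have h1 : (w ((i:ℕ):ℤ) % N) % s = r i := by
        show (w ((i:ℕ):ℤ) % N) % (s:ℤ) = w ((i:ℕ):ℤ) % (s:ℤ)
        exact Int.emod_emod_of_dvd _ hsdN
      have h2 := Int.mul_ediv_add_emod (w ((i:ℕ):ℤ) % N) (s:ℤ)
      omega
    rw [hA]
    have hd := dvd_sub_emod (w ((i:ℕ):ℤ)) N
    rw [show w ((i:ℕ):ℤ) % N - w ((i:ℕ):ℤ) = -(w ((i:ℕ):ℤ) - w ((i:ℕ):ℤ) % N) by ring]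
    exact dvd_neg.mpr hd
  intro i0 hi0
  have h := main ⟨i0, hi0⟩
  rw [permOf_apply, fw_small hs _ (by omega : i0 < s), baseF_small hs _ hi0]
  exact h

end IndexL

/-- The index of `L⁽ⁿ⁾ = H̃_s ∩ {w : w(m) ≡ m (mod ns)}` in the affine hyperoctahedral
group `H̃_s = {w ∈ W̃_s : w(-1-m) = -1-w(m)}` (the number of left cosets)
is `(2n)^u · u!` with `u = ⌊s/2⌋`. -/
theorem index_L (s n : ℕ) (hs : 2 ≤ s) (hn : 1 ≤ n) :
    Nat.card {C : Set (Equiv.Perm ℤ) //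
        ∃ w ∈ {w : Equiv.Perm ℤ | w ∈ AffSymSet s ∧ ∀ m : ℤ, w (-1 - m) = -1 - w m},
        C = {x | ∃ k ∈ {w' : Equiv.Perm ℤ | (w' ∈ AffSymSet s ∧
              ∀ m : ℤ, w' (-1 - m) = -1 - w' m) ∧
              ∀ m : ℤ, ((n : ℤ) * s) ∣ (w' m - m)}, x = w * k}} =
      (2 * n) ^ (s / 2) * Nat.factorial (s / 2) := by
  have hbij : Function.Bijective (IndexL.Phimap s n hs) :=
    ⟨IndexL.Phimap_inj hs, IndexL.Phimap_surj hs hn⟩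
  have hcard := Nat.card_eq_of_bijective _ hbij
  have hT : Nat.card (IndexL.TT s n) = (2 * n) ^ (s / 2) * Nat.factorial (s / 2) := by
    show Nat.card ((Fin (s/2) ↪ Fin (s/2)) × (Fin (s/2) → Fin 2 × Fin n)) = _
    rw [Nat.card_eq_fintype_card, Fintype.card_prod, Fintype.card_embedding_eq,
      Fintype.card_fun, Fintype.card_prod, Fintype.card_fin, Fintype.card_fin,
      Fintype.card_fin, Nat.descFactorial_self]
    ring
  have hfinal : Nat.card {C : Set (Equiv.Perm ℤ) //
      ∃ w ∈ IndexL.HS s, C = IndexL.cosetOf s n w} =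
      (2 * n) ^ (s / 2) * Nat.factorial (s / 2) := by
    rw [← hcard]
    exact hT
  exact hfinal
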